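/- For all 2×2 complex matrices A and B, the partial trace over H₂ of the block operator R(A,B) satisfies (I₄ − Tr₂(R(A,B))) is PSD if and only if (I₂ − A − B) is PSD. (Lemma 3 of the paper, Appendix A.) -/

import Mathlib

/-!
Slicing the vectors `eᵢ` at the traced-out index `k` gives maps `Vₖ : ℂ² → ℂ^{Fin 2 × Fin 2}`
with `Tr₂ (∑ Aᵢⱼ eᵢeⱼᴴ) = ∑ₖ Vₖ A Vₖᴴ`. The primed vectors have the same slices up to the sign
of `V₁`, so `Tr₂ R(A,B) = ∑ₖ Vₖ (A + B) Vₖᴴ`. Since `∑ₖ Vₖ Vₖᴴ = 1`, also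
`1 - Tr₂ R(A,B) = ∑ₖ Vₖ (1 - A - B) Vₖᴴ`. This map preserves positivity, and it is inverted by
compressing with `V₀`, because `V₀ᴴ V₀ = 1` and `V₀ᴴ V₁ = 0`.
-/

open Matrix Kronecker Complex Filter
open scoped ComplexOrder

noncomputable section

/-- Partial trace over the third (output) factor `H₂`. -/
def ptr2 (R : Matrix (Fin 2 × Fin 2 × Fin 2) (Fin 2 × Fin 2 × Fin 2) ℂ) :
    Matrix (Fin 2 × Fin 2) (Fin 2 × Fin 2) ℂ :=
  Matrix.of fun p q => ∑ k : Fin 2, R (p.1, p.2, k) (q.1, q.2, k)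

/-- Tensor product of a vector in `ℂ²` with a vector in `ℂ^{Fin 2 × Fin 2}`. -/
def tv (v : Fin 2 → ℂ) (w : Fin 2 × Fin 2 → ℂ) : Fin 2 × Fin 2 × Fin 2 → ℂ :=
  fun p => v p.1 * w p.2

/-- `|+⟩ = (1,1)/√2`. -/
def plusV : Fin 2 → ℂ := ((Real.sqrt 2 : ℂ))⁻¹ • ![1, 1]

/-- `|−⟩ = (1,−1)/√2`. -/
def minusV : Fin 2 → ℂ := ((Real.sqrt 2 : ℂ))⁻¹ • ![1, -1]

/-- `|I⟩⟩ = (1,0,0,1)`. -/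
def Iket : Fin 2 × Fin 2 → ℂ := fun p =>
  if p = (0, 0) then 1 else if p = (1, 1) then 1 else 0

/-- `|σz⟩⟩ = (1,0,0,−1)`. -/
def Zket : Fin 2 × Fin 2 → ℂ := fun p =>
  if p = (0, 0) then 1 else if p = (1, 1) then -1 else 0

/-- `e₁ = |+⟩⊗|I⟩⟩`, `e₂ = |−⟩⊗|σz⟩⟩`. -/
def eV (i : Fin 2) : Fin 2 × Fin 2 × Fin 2 → ℂ :=
  if i = 0 then tv plusV Iket else tv minusV Zket

/-- `e₁′ = |+⟩⊗|σz⟩⟩`, `e₂′ = |−⟩⊗|I⟩⟩`. -/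
def eV' (i : Fin 2) : Fin 2 × Fin 2 × Fin 2 → ℂ :=
  if i = 0 then tv plusV Zket else tv minusV Iket

/-- The block operator `R(A,B) = ∑ᵢⱼ Aᵢⱼ eᵢeⱼᴴ + ∑ᵢⱼ Bᵢⱼ eᵢ′(eⱼ′)ᴴ`. -/
def Rop (A B : Matrix (Fin 2) (Fin 2) ℂ) :
    Matrix (Fin 2 × Fin 2 × Fin 2) (Fin 2 × Fin 2 × Fin 2) ℂ :=
  (∑ i : Fin 2, ∑ j : Fin 2, A i j • Matrix.vecMulVec (eV i) (star (eV j)))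
  + (∑ i : Fin 2, ∑ j : Fin 2, B i j • Matrix.vecMulVec (eV' i) (star (eV' j)))

theorem Matrix.posSemidef_sum_mul_mul_conjTranspose_iff {ι m n R : Type*} [Fintype ι]
    [DecidableEq ι] [Fintype m] [Fintype n] [DecidableEq n] [Ring R] [PartialOrder R]
    [StarRing R] [AddLeftMono R] (V : ι → Matrix m n R) (i₀ : ι)
    (hV : ∀ i, (V i₀)ᴴ * V i = if i = i₀ then 1 else 0) (X : Matrix n n R) :
    (∑ i, V i * X * (V i)ᴴ).PosSemidef ↔ X.PosSemidef := by
  refine ⟨fun h ↦ ?_, fun h ↦ posSemidef_sum _ fun i _ ↦ h.mul_mul_conjTranspose_same (V i)⟩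
  have hV' : ∀ i, (V i)ᴴ * V i₀ = if i = i₀ then 1 else 0 := fun i ↦ by
    have := congrArg conjTranspose (hV i)
    split_ifs at this ⊢ <;> simpa using this
  have hcompress : (V i₀)ᴴ * (∑ i, V i * X * (V i)ᴴ) * V i₀ = X := by
    rw [Matrix.mul_sum, Matrix.sum_mul, Finset.sum_eq_single i₀]
    · rw [← Matrix.mul_assoc, ← Matrix.mul_assoc, hV, if_pos rfl, Matrix.one_mul,
        Matrix.mul_assoc, hV', if_pos rfl, Matrix.mul_one]
    · intro i _ hi
      rw [← Matrix.mul_assoc, ← Matrix.mul_assoc, hV, if_neg hi, Matrix.zero_mul,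
        Matrix.zero_mul, Matrix.zero_mul]
    · simp
  simpa [hcompress] using h.conjTranspose_mul_mul_same (V i₀)

def krausOp {ι : Type*} (f : ι → Fin 2 × Fin 2 × Fin 2 → ℂ) (k : Fin 2) :
    Matrix (Fin 2 × Fin 2) ι ℂ :=
  of fun p i ↦ f i (p.1, p.2, k)

lemma ptr2_add (R S : Matrix (Fin 2 × Fin 2 × Fin 2) (Fin 2 × Fin 2 × Fin 2) ℂ) :
    ptr2 (R + S) = ptr2 R + ptr2 S := by
  ext p q
  simp [ptr2, Finset.sum_add_distrib]

lemma ptr2_sum_smul_vecMulVec {ι : Type*} [Fintype ι] (f : ι → Fin 2 × Fin 2 × Fin 2 → ℂ)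
    (A : Matrix ι ι ℂ) :
    ptr2 (∑ i, ∑ j, A i j • vecMulVec (f i) (star (f j))) =
      ∑ k, krausOp f k * A * (krausOp f k)ᴴ := by
  ext p q
  simp only [ptr2, krausOp, of_apply, Matrix.sum_apply, Matrix.smul_apply, vecMulVec_apply,
    mul_apply, conjTranspose_apply, Pi.star_apply, smul_eq_mul, Finset.sum_mul]
  refine Finset.sum_congr rfl fun k _ ↦ ?_
  rw [Finset.sum_comm]
  refine Finset.sum_congr rfl fun j _ ↦ Finset.sum_congr rfl fun i _ ↦ ?_
  ring

lemma inv_sqrt_two_mul_self : ((Real.sqrt 2 : ℂ))⁻¹ * ((Real.sqrt 2 : ℂ))⁻¹ = 2⁻¹ := by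
  rw [← mul_inv, ← Complex.ofReal_mul, Real.mul_self_sqrt zero_le_two]
  norm_num

lemma krausOp_eV'_zero : krausOp eV' 0 = krausOp eV 0 := by
  ext ⟨a, b⟩ i
  fin_cases i <;> simp [krausOp, eV, eV', tv, Iket, Zket]

lemma krausOp_eV'_one : krausOp eV' 1 = -krausOp eV 1 := by
  ext ⟨a, b⟩ i
  fin_cases a <;> fin_cases b <;> fin_cases i <;> simp [krausOp, eV, eV', tv, Iket, Zket]

lemma conjTranspose_krausOp_eV_zero_mul (k : Fin 2) :
    (krausOp eV 0)ᴴ * krausOp eV k = if k = 0 then 1 else 0 := by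
  ext i j
  fin_cases k <;> fin_cases i <;> fin_cases j <;>
    norm_num [krausOp, eV, tv, plusV, minusV, Iket, Zket, mul_apply, Fintype.sum_prod_type,
      inv_sqrt_two_mul_self]

lemma sum_krausOp_eV_mul_conjTranspose : ∑ k, krausOp eV k * (krausOp eV k)ᴴ = 1 := by
  ext ⟨a, b⟩ ⟨c, d⟩
  fin_cases a <;> fin_cases b <;> fin_cases c <;> fin_cases d <;>
    norm_num [krausOp, eV, tv, plusV, minusV, Iket, Zket, mul_apply, Fin.sum_univ_two,
      inv_sqrt_two_mul_self, one_apply]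

lemma ptr2_Rop (A B : Matrix (Fin 2) (Fin 2) ℂ) :
    ptr2 (Rop A B) = ∑ k, krausOp eV k * (A + B) * (krausOp eV k)ᴴ := by
  rw [Rop, ptr2_add, ptr2_sum_smul_vecMulVec, ptr2_sum_smul_vecMulVec, ← Finset.sum_add_distrib]
  simp only [Fin.sum_univ_two, krausOp_eV'_zero, krausOp_eV'_one, conjTranspose_neg,
    Matrix.neg_mul, Matrix.mul_neg, neg_neg, Matrix.mul_add, Matrix.add_mul]

theorem partial_trace_normalization_iff (A B : Matrix (Fin 2) (Fin 2) ℂ) :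
    (1 - ptr2 (Rop A B)).PosSemidef ↔ (1 - A - B).PosSemidef := by
  have hconj : 1 - ptr2 (Rop A B) = ∑ k, krausOp eV k * (1 - A - B) * (krausOp eV k)ᴴ := by
    simp only [ptr2_Rop, sub_sub, Matrix.mul_sub, Matrix.sub_mul, Matrix.mul_one,
      Finset.sum_sub_distrib, sum_krausOp_eV_mul_conjTranspose]
  rw [hconj]
  exact posSemidef_sum_mul_mul_conjTranspose_iff _ 0 conjTranspose_krausOp_eV_zero_mul _
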